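/- arXiv:2407.12751 — 2 statements merged into one kernel-verified Lean document; each statement's English description precedes it below -/
import Mathlib

section
/- For the subsampled gradient with control variates, the pseudo-variance bound holds: E‖ξ‖² ≤ (N²/m)‖θ − θ̂‖² (1/N) Σ_{j=1}^N L_j², where ξ is the difference between the control-variate gradient estimator and the true gradient ∇log π(θ), assuming each ∇log π_j is L_j-Lipschitz. -/
/-!
Put `Y j = ∇log π_j(θ) - ∇log π_j(θ̂)` and let `Z j = Y j - Ȳ` be its centred version. The
error is then `ξ = (N/m) ∑ₖ Z (J k)`. The indices `J k` are independent and uniform, and the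
`Z j` have mean zero, so the cross terms of `‖∑ₖ Z (J k)‖²` vanish in expectation:
`E‖ξ‖² = (N²/m) 𝔼ⱼ ‖Z j‖² ≤ (N²/m) 𝔼ⱼ ‖Y j‖²`. Finally `‖Y j‖ ≤ L j ‖θ - θ̂‖` by the Lipschitz bound.
-/

open MeasureTheory ENNReal Finset RealInnerProductSpace
open scoped BigOperators

theorem integral_comp_eq_expect_of_uniform {Ω α : Type*} [MeasurableSpace Ω] {P : Measure Ω}
    [IsFiniteMeasure P] [Fintype α] [MeasurableSpace α] [MeasurableSingletonClass α]
    {X : Ω → α} (hX : Measurable X) (hunif : ∀ a, P (X ⁻¹' {a}) = (Fintype.card α : ℝ≥0∞)⁻¹)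
    (f : α → ℝ) :
    ∫ ω, f (X ω) ∂P = 𝔼 a, f a := by
  rw [← integral_map hX.aemeasurable (measurable_of_finite f).aestronglyMeasurable,
    integral_fintype Integrable.of_finite, Fintype.expect_eq_sum_div_card, sum_div]
  refine sum_congr rfl fun a _ => ?_
  rw [map_measureReal_apply hX (measurableSet_singleton a), measureReal_def, hunif, smul_eq_mul,
    toReal_inv, toReal_natCast, inv_mul_eq_div]

section Centering

variable {ι E : Type*} [Fintype ι] [AddCommGroup E] [Module ℝ E]

noncomputable def centered (Y : ι → E) (j : ι) : E := Y j - (Fintype.card ι : ℝ)⁻¹ • ∑ i, Y i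

theorem card_smul_inv_card_smul_sum (Y : ι → E) :
    (Fintype.card ι : ℝ) • (Fintype.card ι : ℝ)⁻¹ • ∑ i, Y i = ∑ i, Y i := by
  rcases isEmpty_or_nonempty ι with hι | hι
  · simp
  · exact smul_inv_smul₀ (Nat.cast_ne_zero.mpr Fintype.card_ne_zero) _

theorem sum_centered (Y : ι → E) : ∑ j, centered Y j = 0 := by
  simp only [centered, sum_sub_distrib, sum_const, card_univ, ← Nat.cast_smul_eq_nsmul ℝ,
    card_smul_inv_card_smul_sum, sub_self]

theorem smul_sum_centered_comp {m : ℕ} (hm : m ≠ 0) (Y : ι → E) (c : Fin m → ι) :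
    ((Fintype.card ι : ℝ) / m) • ∑ k, centered Y (c k) =
      ((Fintype.card ι : ℝ) / m) • ∑ k, Y (c k) - ∑ j, Y j := by
  simp only [centered, sum_sub_distrib, sum_const, card_univ, Fintype.card_fin, smul_sub,
    ← Nat.cast_smul_eq_nsmul ℝ]
  rw [smul_smul, div_mul_cancel₀ _ (Nat.cast_ne_zero.mpr hm), card_smul_inv_card_smul_sum]

end Centering

theorem expect_norm_sq_centered_le {ι E : Type*} [Fintype ι] [NormedAddCommGroup E]
    [InnerProductSpace ℝ E] (Y : ι → E) :
    𝔼 j, ‖centered Y j‖ ^ 2 ≤ 𝔼 j, ‖Y j‖ ^ 2 := by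
  set μ := (Fintype.card ι : ℝ)⁻¹ • ∑ i, Y i
  have hcentered : ∀ j, centered Y j = Y j - μ := fun j => rfl
  have hsum : ∑ j, ‖centered Y j‖ ^ 2 = ∑ j, ‖Y j‖ ^ 2 - Fintype.card ι * ‖μ‖ ^ 2 := by
    simp only [hcentered, norm_sub_sq_real, sum_add_distrib, sum_sub_distrib, ← mul_sum,
      ← sum_inner, sum_const, card_univ, nsmul_eq_mul]
    rw [← card_smul_inv_card_smul_sum Y, real_inner_smul_left, real_inner_self_eq_norm_sq]
    ring
  simp only [Fintype.expect_eq_sum_div_card, hsum]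
  gcongr
  exact sub_le_self _ (by positivity)

theorem expect_norm_sq_sum_comp {ι E : Type*} [Fintype ι] [NormedAddCommGroup E]
    [InnerProductSpace ℝ E] {Z : ι → E} (hZ : ∑ j, Z j = 0) (m : ℕ) :
    𝔼 c : Fin m → ι, ‖∑ k, Z (c k)‖ ^ 2 = m * 𝔼 j, ‖Z j‖ ^ 2 := by
  rcases isEmpty_or_nonempty ι with hι | hι
  · cases m <;> simp
  induction m with
  | zero => simp
  | succ m ih =>
    have hcross : ∀ w : E, 𝔼 a, ⟪Z a, w⟫ = 0 := fun w => by
      rw [Fintype.expect_eq_sum_div_card, ← sum_inner, hZ, inner_zero_left, zero_div]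
    have hcons : 𝔼 c : Fin (m + 1) → ι, ‖∑ k, Z (c k)‖ ^ 2 =
        𝔼 a, 𝔼 c : Fin m → ι, ‖Z a + ∑ k, Z (c k)‖ ^ 2 := by
      rw [← expect_product', univ_product_univ]
      exact (Fintype.expect_equiv (Fin.consEquiv fun _ => ι) _ _ fun p => by
        simp [Fin.sum_univ_succ, Fin.consEquiv]).symm
    calc 𝔼 c : Fin (m + 1) → ι, ‖∑ k, Z (c k)‖ ^ 2
        = 𝔼 a, ‖Z a‖ ^ 2 + 2 * 𝔼 c : Fin m → ι, 𝔼 a, ⟪Z a, ∑ k, Z (c k)⟫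
            + 𝔼 c : Fin m → ι, ‖∑ k, Z (c k)‖ ^ 2 := by
          simp only [hcons, norm_add_sq_real, expect_add_distrib, Fintype.expect_const,
            ← mul_expect]
          rw [expect_comm]
      _ = (m + 1 : ℕ) * 𝔼 j, ‖Z j‖ ^ 2 := by
          simp only [hcross, expect_const_zero, ih]
          push_cast
          ring

theorem stmt16_general {Ω : Type*} [MeasurableSpace Ω] (P : Measure Ω) [IsProbabilityMeasure P]
    {d N m : ℕ} (hm : 0 < m)
    (G : Fin N → EuclideanSpace ℝ (Fin d) → EuclideanSpace ℝ (Fin d))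
    (L : Fin N → ℝ)
    (hLip : ∀ j x y, ‖G j x - G j y‖ ≤ L j * ‖x - y‖)
    (θ θhat : EuclideanSpace ℝ (Fin d))
    (J : Fin m → Ω → Fin N) (hJmeas : ∀ k, Measurable (J k))
    (hiid : ∀ c : Fin m → Fin N, P {ω | ∀ k, J k ω = c k} = ((N : ℝ≥0∞))⁻¹ ^ m)
    (ξ : Ω → EuclideanSpace ℝ (Fin d))
    (hξ : ∀ ω, ξ ω = (∑ j, G j θhat)
        + ((N : ℝ) / (m : ℝ)) • (∑ k, (G (J k ω) θ - G (J k ω) θhat))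
        - ∑ j, G j θ) :
    ∫ ω, ‖ξ ω‖ ^ 2 ∂P ≤
      ((N : ℝ) ^ 2 / (m : ℝ)) * ‖θ - θhat‖ ^ 2 * ((1 / (N : ℝ)) * ∑ j, (L j) ^ 2) := by
  set Y := fun j => G j θ - G j θhat
  have hξY : ∀ ω, ξ ω = ((N : ℝ) / m) • ∑ k, centered Y (J k ω) := fun ω => by
    have hcentered := smul_sum_centered_comp hm.ne' Y (fun k => J k ω)
    rw [Fintype.card_fin] at hcentered
    rw [hcentered, hξ]
    simp only [Y, sum_sub_distrib]
    abel
  have hunif : ∀ c, P ((fun ω k => J k ω) ⁻¹' {c}) =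
      (Fintype.card (Fin m → Fin N) : ℝ≥0∞)⁻¹ := by
    intro c
    simpa [Set.preimage, funext_iff, ENNReal.inv_pow] using hiid c
  calc ∫ ω, ‖ξ ω‖ ^ 2 ∂P
      = 𝔼 c : Fin m → Fin N, ‖((N : ℝ) / m) • ∑ k, centered Y (c k)‖ ^ 2 := by
        simp_rw [hξY]
        exact integral_comp_eq_expect_of_uniform (measurable_pi_lambda _ hJmeas) hunif
          fun c => ‖((N : ℝ) / m) • ∑ k, centered Y (c k)‖ ^ 2
    _ = (N : ℝ) ^ 2 / m * 𝔼 j, ‖centered Y j‖ ^ 2 := by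
        simp_rw [norm_smul, Real.norm_eq_abs, mul_pow, sq_abs, ← mul_expect,
          expect_norm_sq_sum_comp (sum_centered Y)]
        field_simp
    _ ≤ (N : ℝ) ^ 2 / m * 𝔼 j, (L j * ‖θ - θhat‖) ^ 2 := by
        refine mul_le_mul_of_nonneg_left ((expect_norm_sq_centered_le Y).trans
          (expect_le_expect fun j _ => ?_)) (by positivity)
        gcongr
        exact hLip j θ θhat
    _ = _ := by
        simp_rw [Fintype.expect_eq_sum_div_card, Fintype.card_fin, mul_pow, ← sum_mul]
        ring

/-- Pseudo-variance bound for the subsampled gradient with control variates: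
`E‖ξ‖² ≤ (N²/m)‖θ-θ̂‖² (1/N) Σ_j L_j²`, where `ξ` is the difference between
the control-variate gradient estimator (based on `m` indices drawn uniformly
with replacement) and the true gradient `∇log π(θ) = Σ_j ∇log π_j(θ)`, and
each `∇log π_j` is `L_j`-Lipschitz. -/
theorem stmt16 {Ω : Type*} [MeasurableSpace Ω] (P : Measure Ω) [IsProbabilityMeasure P]
    {d N m : ℕ} (hN : 0 < N) (hm : 0 < m)
    (πj : Fin N → EuclideanSpace ℝ (Fin d) → ℝ) (hπ : ∀ j x, 0 < πj j x)
    (G : Fin N → EuclideanSpace ℝ (Fin d) → EuclideanSpace ℝ (Fin d))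
    (hgrad : ∀ j x, HasGradientAt (fun y => Real.log (πj j y)) (G j x) x)
    (L : Fin N → ℝ)
    (hLip : ∀ j x y, ‖G j x - G j y‖ ≤ L j * ‖x - y‖)
    (θ θhat : EuclideanSpace ℝ (Fin d))
    (J : Fin m → Ω → Fin N) (hJmeas : ∀ k, Measurable (J k))
    (hiid : ∀ c : Fin m → Fin N, P {ω | ∀ k, J k ω = c k} = ((N : ℝ≥0∞))⁻¹ ^ m)
    (ξ : Ω → EuclideanSpace ℝ (Fin d))
    (hξ : ∀ ω, ξ ω = (∑ j, G j θhat)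
        + ((N : ℝ) / (m : ℝ)) • (∑ k, (G (J k ω) θ - G (J k ω) θhat))
        - ∑ j, G j θ) :
    ∫ ω, ‖ξ ω‖ ^ 2 ∂P ≤
      ((N : ℝ) ^ 2 / (m : ℝ)) * ‖θ - θhat‖ ^ 2 * ((1 / (N : ℝ)) * ∑ j, (L j) ^ 2) :=
  stmt16_general P hm G L hLip θ θhat J hJmeas hiid ξ hξ
end

section
/- Stein's integration-by-parts identity: if g : ℝ^d → ℝ^d is a continuously differentiable vector field with πg ∈ L¹(ℝ^d) and ∇·(πg) ∈ L¹(ℝ^d), where π is a continuously differentiable probability density on ℝ^d, then ∫ [(∇·g)(x) + ⟨∇log π(x), g(x)⟩] π(x) dx = 0. -/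
open MeasureTheory Filter Topology

/-!
Since `A_π g · π = ∇·(πg)` pointwise, it suffices to show `∫ ∇·h = 0` for the `C¹` field
`h = πg` with `h, ∇·h ∈ L¹`. Only the sum `∇·h = ∑ ∂ᵢhᵢ` is integrable, not each `∂ᵢhᵢ`, so
integrate by parts against the rescaled bump `χ(t ·)`, `χ = 1` near `0`:
`∫ χ(tx) ∇·h(x) dx = -t ∫ Dχ(tx) h(x) dx = O(t)` because `h ∈ L¹`, while by dominated
convergence the left side tends to `∫ ∇·h` as `t → 0⁺`.
-/

section

variable {E : Type*} [NormedAddCommGroup E] [NormedSpace ℝ E] [MeasurableSpace E]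
  [OpensMeasurableSpace E] {μ : Measure E}

theorem tendsto_integral_comp_smul_mul {χ : E → ℝ} {C : ℝ} (hχ : Continuous χ)
    (hχ_le : ∀ x, ‖χ x‖ ≤ C) {f : E → ℝ} (hf : Integrable f μ) :
    Tendsto (fun t : ℝ => ∫ x, χ (t • x) * f x ∂μ) (𝓝 0) (𝓝 (χ 0 * ∫ x, f x ∂μ)) := by
  rw [← integral_const_mul]
  refine tendsto_integral_filter_of_dominated_convergence (fun x => C * ‖f x‖)
    (.of_forall fun t => ((hχ.comp (continuous_const_smul t)).aestronglyMeasurable.mul hf.1))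
    (.of_forall fun t => .of_forall fun x => ?_) (hf.norm.const_mul C) (.of_forall fun x => ?_)
  · rw [norm_mul]
    exact mul_le_mul_of_nonneg_right (hχ_le _) (norm_nonneg _)
  · have : Tendsto (fun t : ℝ => t • x) (𝓝 0) (𝓝 0) :=
      (continuous_id.smul continuous_const).tendsto' 0 0 (zero_smul ℝ x)
    exact ((hχ.tendsto 0).comp this).mul_const _

end

section Divergence

variable {ι : Type*} [Fintype ι] [DecidableEq ι]

noncomputable def divergence (h : (ι → ℝ) → ι → ℝ) (x : ι → ℝ) : ℝ :=
  ∑ i, fderiv ℝ (fun y => h y i) x (Pi.single i 1)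

noncomputable def steinOperator (π : (ι → ℝ) → ℝ) (g : (ι → ℝ) → ι → ℝ) (x : ι → ℝ) : ℝ :=
  divergence g x + ∑ i, fderiv ℝ (fun y => Real.log (π y)) x (Pi.single i 1) * g x i

theorem sum_apply_single_mul (L : (ι → ℝ) →L[ℝ] ℝ) (v : ι → ℝ) :
    ∑ i, L (Pi.single i 1) * v i = L v := by
  conv_rhs => rw [pi_eq_sum_univ' v]
  simp [map_sum, mul_comm]

theorem divergence_smul {φ : (ι → ℝ) → ℝ} {h : (ι → ℝ) → ι → ℝ} {x : ι → ℝ}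
    (hφ : DifferentiableAt ℝ φ x) (hh : DifferentiableAt ℝ h x) :
    divergence (fun y => φ y • h y) x = φ x * divergence h x + fderiv ℝ φ x (h x) := by
  have hmul : ∀ i, fderiv ℝ (fun y => φ y * h y i) x
      = φ x • fderiv ℝ (fun y => h y i) x + h x i • fderiv ℝ φ x := fun i =>
    fderiv_mul hφ (differentiableAt_pi.mp hh i)
  simp only [divergence, Pi.smul_apply, smul_eq_mul, hmul, _root_.add_apply,
    _root_.smul_apply, Finset.sum_add_distrib, Finset.mul_sum]
  rw [← sum_apply_single_mul]
  simp [mul_comm]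

theorem steinOperator_mul_eq_divergence {π : (ι → ℝ) → ℝ} {g : (ι → ℝ) → ι → ℝ} {x : ι → ℝ}
    (hπ : DifferentiableAt ℝ π x) (hπx : π x ≠ 0) (hg : DifferentiableAt ℝ g x) :
    steinOperator π g x * π x = divergence (fun y => π y • g y) x := by
  rw [divergence_smul hπ hg, ← sum_apply_single_mul, steinOperator, fderiv.log hπ hπx]
  simp only [_root_.smul_apply, smul_eq_mul, add_mul, Finset.sum_mul]
  congr 1
  · ring
  · refine Finset.sum_congr rfl fun i _ => ?_
    field_simp

variable {μ : Measure (ι → ℝ)} [μ.IsAddHaarMeasure]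

theorem integral_mul_divergence_eq_neg {χ : (ι → ℝ) → ℝ} {h : (ι → ℝ) → ι → ℝ}
    (hχ : ContDiff ℝ 1 χ) (hχ_supp : HasCompactSupport χ) (hh : ContDiff ℝ 1 h) :
    ∫ x, χ x * divergence h x ∂μ = -∫ x, fderiv ℝ χ x (h x) ∂μ := by
  have hhi : ∀ i, ContDiff ℝ 1 (fun y => h y i) := contDiff_pi.mp hh
  have hcont : ∀ {u : (ι → ℝ) → ℝ}, ContDiff ℝ 1 u → ∀ v, Continuous fun x => fderiv ℝ u x v :=
    fun hu _ => (hu.continuous_fderiv one_ne_zero).clm_apply continuous_const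
  have hχ_dh : ∀ i, Integrable (fun x => χ x * fderiv ℝ (fun y => h y i) x (Pi.single i 1)) μ :=
    fun i => (hχ.continuous.mul (hcont (hhi i) _)).integrable_of_hasCompactSupport
      hχ_supp.mul_right
  have hdχ_h : ∀ i, Integrable (fun x => fderiv ℝ χ x (Pi.single i 1) * h x i) μ :=
    fun i => ((hcont hχ _).mul (hhi i).continuous).integrable_of_hasCompactSupport
      (hχ_supp.fderiv_apply ℝ _).mul_right
  have hχ_h : ∀ i, Integrable (fun x => χ x * h x i) μ :=
    fun i => (hχ.continuous.mul (hhi i).continuous).integrable_of_hasCompactSupport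
      hχ_supp.mul_right
  calc ∫ x, χ x * divergence h x ∂μ
      = ∑ i, ∫ x, χ x * fderiv ℝ (fun y => h y i) x (Pi.single i 1) ∂μ := by
        simp only [divergence, Finset.mul_sum]
        exact integral_finsetSum _ fun i _ => hχ_dh i
    _ = ∑ i, -∫ x, fderiv ℝ χ x (Pi.single i 1) * h x i ∂μ :=
        Finset.sum_congr rfl fun i _ => integral_mul_fderiv_eq_neg_fderiv_mul_of_integrable
          (hdχ_h i) (hχ_dh i) (hχ_h i) (fun x _ => hχ.differentiable one_ne_zero x)
          (fun x _ => (hhi i).differentiable one_ne_zero x)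
    _ = -∫ x, fderiv ℝ χ x (h x) ∂μ := by
        rw [Finset.sum_neg_distrib, ← integral_finsetSum _ fun i _ => hdχ_h i]
        simp only [sum_apply_single_mul]

theorem norm_integral_mul_divergence_le {χ : (ι → ℝ) → ℝ} {h : (ι → ℝ) → ι → ℝ} {C : ℝ}
    (hχ : ContDiff ℝ 1 χ) (hχ_supp : HasCompactSupport χ) (hχ' : ∀ x, ‖fderiv ℝ χ x‖ ≤ C)
    (hh : ContDiff ℝ 1 h) (hint : Integrable h μ) :
    ‖∫ x, χ x * divergence h x ∂μ‖ ≤ C * ∫ x, ‖h x‖ ∂μ := by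
  rw [integral_mul_divergence_eq_neg hχ hχ_supp hh, norm_neg, ← integral_const_mul]
  refine norm_integral_le_of_norm_le (hint.norm.const_mul C) (.of_forall fun x => ?_)
  exact ((fderiv ℝ χ x).le_opNorm _).trans (mul_le_mul_of_nonneg_right (hχ' x) (norm_nonneg _))

theorem integral_divergence_eq_zero {h : (ι → ℝ) → ι → ℝ} (hh : ContDiff ℝ 1 h)
    (hint : Integrable h μ) (hdiv : Integrable (divergence h) μ) :
    ∫ x, divergence h x ∂μ = 0 := by
  let χ : ContDiffBump (0 : ι → ℝ) := ⟨1, 2, one_pos, one_lt_two⟩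
  have hχ : ContDiff ℝ 1 χ := χ.contDiff
  obtain ⟨C, hC⟩ := (χ.hasCompactSupport.fderiv ℝ).exists_bound_of_continuous
    (hχ.continuous_fderiv one_ne_zero)
  have h_lim : Tendsto (fun t : ℝ => ∫ x, χ (t • x) * divergence h x ∂μ) (𝓝[>] 0)
      (𝓝 (∫ x, divergence h x ∂μ)) := by
    have := tendsto_integral_comp_smul_mul (C := 1) χ.continuous (fun x => ?_) hdiv (μ := μ)
    · simpa [χ.one_of_mem_closedBall (Metric.mem_closedBall_self χ.rIn_pos.le)]
        using this.mono_left nhdsWithin_le_nhds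
    · rw [Real.norm_of_nonneg χ.nonneg]
      exact χ.le_one
  have h_zero : Tendsto (fun t : ℝ => ∫ x, χ (t • x) * divergence h x ∂μ) (𝓝[>] 0) (𝓝 0) := by
    refine squeeze_zero_norm' (a := fun t => (t * C) * ∫ x, ‖h x‖ ∂μ) ?_ ?_
    · filter_upwards [self_mem_nhdsWithin] with t (ht : 0 < t)
      refine norm_integral_mul_divergence_le (hχ.comp (contDiff_const_smul t))
        (χ.hasCompactSupport.comp_smul ht.ne') (fun x => ?_) hh hint
      rw [fderiv_comp_smul, norm_smul, Real.norm_of_nonneg ht.le]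
      exact mul_le_mul_of_nonneg_left (hC _) ht.le
    · refine tendsto_nhdsWithin_of_tendsto_nhds ?_
      simpa using ((tendsto_id (x := 𝓝 (0 : ℝ))).mul_const C).mul_const (∫ x, ‖h x‖ ∂μ)
  exact tendsto_nhds_unique h_lim h_zero

end Divergence

theorem stmt19_general {d : ℕ} (π : (Fin d → ℝ) → ℝ) (g : (Fin d → ℝ) → (Fin d → ℝ))
    (hπpos : ∀ x, 0 < π x) (hπ : ContDiff ℝ 1 π) (hg : ContDiff ℝ 1 g)
    (hL1 : Integrable fun x => ‖π x • g x‖)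
    (hdivL1 : Integrable fun x =>
      ∑ i, fderiv ℝ (fun y => π y * g y i) x (Pi.single i 1)) :
    (∫ x, ((∑ i, fderiv ℝ (fun y => g y i) x (Pi.single i 1))
        + ∑ i, fderiv ℝ (fun y => Real.log (π y)) x (Pi.single i 1) * g x i) * π x) = 0 := by
  have hπg : ContDiff ℝ 1 fun x => π x • g x := hπ.smul hg
  calc ∫ x, steinOperator π g x * π x
      = ∫ x, divergence (fun y => π y • g y) x :=
        integral_congr_ae <| .of_forall fun x => steinOperator_mul_eq_divergence
          (hπ.differentiable one_ne_zero x) (hπpos x).ne' (hg.differentiable one_ne_zero x)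
    _ = 0 := integral_divergence_eq_zero hπg
        ((integrable_norm_iff hπg.continuous.aestronglyMeasurable).mp hL1) hdivL1

/-- Stein's integration-by-parts identity: if `π` is a positive `C¹` probability
density on `ℝ^d` and `g` a `C¹` vector field with `πg ∈ L¹` and `∇·(πg) ∈ L¹`,
then `∫ [(∇·g)(x) + ⟨∇log π(x), g(x)⟩] π(x) dx = 0`. -/
theorem stmt19 {d : ℕ} (π : (Fin d → ℝ) → ℝ) (g : (Fin d → ℝ) → (Fin d → ℝ))
    (hπpos : ∀ x, 0 < π x) (hπ : ContDiff ℝ 1 π) (hg : ContDiff ℝ 1 g)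
    (hπint : (∫ x, π x) = 1)
    (hL1 : Integrable fun x => ‖π x • g x‖)
    (hdivL1 : Integrable fun x =>
      ∑ i, fderiv ℝ (fun y => π y * g y i) x (Pi.single i 1)) :
    (∫ x, ((∑ i, fderiv ℝ (fun y => g y i) x (Pi.single i 1))
        + ∑ i, fderiv ℝ (fun y => Real.log (π y)) x (Pi.single i 1) * g x i) * π x) = 0 :=
  stmt19_general π g hπpos hπ hg hL1 hdivL1
end
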